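/- For every odd integer d with 1 ≤ d ≤ 27 and d ∉ {7, 9, 11}, we have 2·Q_d'(0) ≤ 0.99, where Q_d'(0) denotes the derivative of the polynomial Q_d at 0. -/

import Mathlib

/-!
Each summand of `Q d` is a constant times `f ^ (k + (j + k - i))` times a polynomial equal to
`1` at `0`, and `j > i` on the range of summation. So only the summands with `k = 0` and
`j = i + 1` contribute to `Q_d'(0)`, and `j ≥ ⌊d/2⌋ + 1 > i` leaves only `i = ⌊d/2⌋`; this
gives the closed form `Q_d'(0) = C(d, ⌊d/2⌋) (1/3)^⌊d/2⌋ (2/3)^⌈d/2⌉ ⌈d/2⌉ / 2`, which is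
then checked numerically.
-/

/-- The polynomial `Q_d`: the probability that a given colour "overtakes" as the
majority colour among `d` independently uniformly 3-coloured vertices, when each vertex
is independently recoloured (to a uniformly random different colour) with probability
`f`. -/
noncomputable def Q (d : ℕ) (f : ℝ) : ℝ :=
  ∑ i ∈ Finset.Icc 1 (d / 2),
    (Nat.choose d i : ℝ) * (1 / 3 : ℝ) ^ i * (2 / 3 : ℝ) ^ (d - i) *
      ∑ j ∈ Finset.Icc (d / 2 + 1) d, ∑ k ∈ Finset.range (i + 1),
        (Nat.choose i k : ℝ) * f ^ k * (1 - f) ^ (i - k) *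
          (Nat.choose (d - i) (j + k - i) : ℝ) * (f / 2) ^ (j + k - i) *
          (1 - f / 2) ^ (d - j - k)

open Finset

theorem hasDerivAt_pow_mul_at_zero {𝕜 : Type*} [NontriviallyNormedField 𝕜] {g : 𝕜 → 𝕜}
    {n : ℕ} (hn : n ≠ 0) (hg : DifferentiableAt 𝕜 g 0) :
    HasDerivAt (fun x => x ^ n * g x) (if n = 1 then g 0 else 0) 0 := by
  refine ((hasDerivAt_pow n 0).mul hg.hasDerivAt).congr_deriv ?_
  rcases eq_or_ne n 1 with rfl | hn1
  · simp
  · have hn2 : n - 1 ≠ 0 := by omega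
    simp [hn, hn1, zero_pow hn2]

theorem hasDerivAt_Q_summand {d i j k : ℕ} (hij : i < j) :
    HasDerivAt (fun f : ℝ => (Nat.choose i k : ℝ) * f ^ k * (1 - f) ^ (i - k) *
        (Nat.choose (d - i) (j + k - i) : ℝ) * (f / 2) ^ (j + k - i) * (1 - f / 2) ^ (d - j - k))
      (if k = 0 ∧ j = i + 1 then ((d - i : ℕ) : ℝ) / 2 else 0) 0 := by
  set m := j + k - i
  have hfun : (fun f : ℝ => (Nat.choose i k : ℝ) * f ^ k * (1 - f) ^ (i - k) *
        (Nat.choose (d - i) m : ℝ) * (f / 2) ^ m * (1 - f / 2) ^ (d - j - k)) =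
      fun f => (Nat.choose i k * Nat.choose (d - i) m / 2 ^ m : ℝ) *
        (f ^ (k + m) * ((1 - f) ^ (i - k) * (1 - f / 2) ^ (d - j - k))) := by
    funext f
    rw [div_pow]
    ring
  rw [hfun]
  refine ((hasDerivAt_pow_mul_at_zero (by omega) (by fun_prop)).const_mul _).congr_deriv ?_
  by_cases h : k = 0 ∧ j = i + 1
  · obtain ⟨rfl, rfl⟩ := h
    simp [m]
  · rw [if_neg h, if_neg (by omega), mul_zero]

theorem hasDerivAt_Q_zero (d : ℕ) :
    HasDerivAt (Q d) (∑ i ∈ Icc 1 (d / 2),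
      (Nat.choose d i : ℝ) * (1 / 3 : ℝ) ^ i * (2 / 3 : ℝ) ^ (d - i) *
        ∑ j ∈ Icc (d / 2 + 1) d, ∑ k ∈ range (i + 1),
          if k = 0 ∧ j = i + 1 then ((d - i : ℕ) : ℝ) / 2 else 0) 0 := by
  refine HasDerivAt.fun_sum fun i hi => .const_mul _ <| .fun_sum fun j hj => .fun_sum fun k _ =>
    hasDerivAt_Q_summand ?_
  simp only [mem_Icc] at hi hj
  omega

theorem deriv_Q_zero {d : ℕ} (hd : 2 ≤ d) :
    deriv (Q d) 0 = Nat.choose d (d / 2) * (1 / 3 : ℝ) ^ (d / 2) * (2 / 3 : ℝ) ^ (d - d / 2) *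
      (((d - d / 2 : ℕ) : ℝ) / 2) := by
  rw [(hasDerivAt_Q_zero d).deriv, sum_eq_single_of_mem (d / 2) (by simp; omega)]
  · simp [ite_and, sum_ite_eq']
    omega
  · intro i hi hne
    simp only [mem_Icc] at hi
    simp [ite_and, sum_ite_eq']
    omega

theorem Q_one : Q 1 = 0 := by
  funext f
  simp [Q]

theorem two_Q_deriv_zero_le_general (d : ℕ) (hodd : Odd d) (h27 : d ≤ 27)
    (h7 : d ≠ 7) (h9 : d ≠ 9) (h11 : d ≠ 11) :
    2 * deriv (Q d) 0 ≤ 0.99 := by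
  obtain ⟨m, rfl⟩ := hodd
  rcases Nat.eq_zero_or_pos m with rfl | hm
  · norm_num [Q_one]
  rw [deriv_Q_zero (by omega)]
  have hm13 : m ≤ 13 := by omega
  interval_cases m <;>
    first | omega | norm_num [Nat.choose_eq_descFactorial_div_factorial, Nat.descFactorial]

/-- For every odd `1 ≤ d ≤ 27` with `d ∉ {7, 9, 11}`, we have `2·Q_d'(0) ≤ 0.99`. -/
theorem two_Q_deriv_zero_le (d : ℕ) (hodd : Odd d) (h1 : 1 ≤ d) (h27 : d ≤ 27)
    (h7 : d ≠ 7) (h9 : d ≠ 9) (h11 : d ≠ 11) :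
    2 * deriv (Q d) 0 ≤ 0.99 :=
  two_Q_deriv_zero_le_general d hodd h27 h7 h9 h11
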